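/- arXiv:math/0605571 — 2 statements merged into one kernel-verified Lean document; each statement's English description precedes it below -/
import Mathlib

section
/- Let 𝔻 = (σ₀, σ₁, σ₂) be an oriented ribbon graph on a finite set B. Then v(𝔻) − e(𝔻) + f(𝔻) is even and v(𝔻) − e(𝔻) + f(𝔻) ≤ 2k(𝔻); equivalently, the genus g(𝔻) = (2k(𝔻) − v(𝔻) + e(𝔻) − f(𝔻))/2 is a nonnegative integer. -/
open Equiv Finset

/-- The number of orbits, i.e. classes of the equivalence relation generated by `r`. -/
noncomputable def orbCount {α : Type*} (r : α → α → Prop) : ℕ := Nat.card (Quot r)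

variable {B : Type} [Fintype B] [DecidableEq B]

/-- The first-return map of a permutation `σ` of `B` to a subset `P ⊆ B`:
`b ↦ σ^m b` for the minimal `m ≥ 1` with `σ^m b ∈ P`. -/
def firstRet (σ : Equiv.Perm B) (P : Finset B) (b : ↥P) : ↥P :=
  have h : ∃ m, 0 < m ∧ (σ ^ m) (b : B) ∈ P :=
    ⟨orderOf σ, orderOf_pos σ, by rw [pow_orderOf_eq_one]; simpa using b.2⟩
  ⟨(σ ^ Nat.find h) (b : B), (Nat.find_spec h).2⟩

/-- An oriented ribbon graph: a triple of permutations of a finite set `B` such that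
`σ₁` is a fixed-point-free involution and `σ₀ ∘ σ₁ ∘ σ₂ = id`. -/
structure RibbonGraph (B : Type) [Fintype B] [DecidableEq B] where
  s0 : Equiv.Perm B
  s1 : Equiv.Perm B
  s2 : Equiv.Perm B
  invol : ∀ b, s1 (s1 b) = b
  fpf : ∀ b, s1 b ≠ b
  triple : ∀ b, s0 (s1 (s2 b)) = b

namespace RibbonGraph

variable (D : RibbonGraph B)

/-- `v(𝔻)`: the number of orbits of `σ₀`. -/
noncomputable def vN : ℕ := orbCount fun a b : B => D.s0 a = b

/-- `e(𝔻)`: the number of orbits of `σ₁`. -/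
noncomputable def eN : ℕ := orbCount fun a b : B => D.s1 a = b

/-- `f(𝔻)`: the number of orbits of `σ₂`. -/
noncomputable def fN : ℕ := orbCount fun a b : B => D.s2 a = b

/-- `k(𝔻)`: the number of orbits of the subgroup generated by `σ₀` and `σ₁`. -/
noncomputable def kN : ℕ := orbCount fun a b : B => D.s0 a = b ∨ D.s1 a = b

/-- The genus `g(𝔻) = (2k − v + e − f)/2`. -/
noncomputable def gN : ℕ := (2 * D.kN + D.eN - D.vN - D.fN) / 2

/-- `𝔻` is connected if the subgroup generated by `σ₀` and `σ₁` acts transitively on `B`. -/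
def Connected : Prop :=
  ∀ a b : B, ∃ g ∈ Subgroup.closure ({D.s0, D.s1} : Set (Equiv.Perm B)), g a = b

end RibbonGraph

/-- A ribbon graph together with the bookkeeping needed for spanning subgraphs,
deletions and contractions: an ambient vertex permutation `s0` and edge involution `s1`
on `B`, and the set `act` of active half-edges (which is `s1`-invariant, `s1` being a
fixed-point-free involution on it).  The σ₀-orbits of `B` disjoint from `act` are the
isolated vertices; each contributes one vertex, one face and one connected component. -/
structure RG (B : Type) [Fintype B] [DecidableEq B] where
  act : Finset B
  s0 : Equiv.Perm B
  s1 : Equiv.Perm B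
  invol : ∀ b, s1 (s1 b) = b
  fpf : ∀ b ∈ act, s1 b ≠ b
  closed : ∀ b ∈ act, s1 b ∈ act

/-- A plain ribbon graph, viewed with all of its half-edges active. -/
def RibbonGraph.toRG (D : RibbonGraph B) : RG B :=
  ⟨Finset.univ, D.s0, D.s1, D.invol, fun b _ => D.fpf b, fun _ _ => Finset.mem_univ _⟩

namespace RG

variable (G : RG B)

/-- The edge (σ₁-orbit) `{a, σ₁ a}` of a half-edge `a`. -/
def edgeOf (a : B) : Finset B := {a, G.s1 a}

/-- The edge set `E(𝔻)`: the set of orbits `{b, σ₁ b}` of `σ₁`. -/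
def edges : Finset (Finset B) := G.act.image G.edgeOf

/-- `e(𝔻)`: the number of edges. -/
def numE : ℕ := G.edges.card

/-- `v(𝔻)`: the number of vertices, i.e. of `σ₀`-orbits (first-return orbits on the
active part together with the isolated vertices). -/
noncomputable def numV : ℕ := orbCount fun a b : B => G.s0 a = b

/-- The number of isolated vertices: `σ₀`-orbits of `B` disjoint from the active part. -/
noncomputable def isolated : ℕ :=
  Nat.card {x : Quot (fun a b : B => G.s0 a = b) // ∀ a : B, Quot.mk _ a = x → a ∉ G.act}

/-- The vertex permutation: first-return map of `σ₀` to the active half-edges. -/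
def ret0 : ↥G.act → ↥G.act := firstRet G.s0 G.act

/-- The edge involution restricted to the active half-edges. -/
def ret1 : ↥G.act → ↥G.act := fun b => ⟨G.s1 b, G.closed b b.2⟩

/-- `f(𝔻)`: the number of faces, i.e. orbits of the face permutation σ₂ = (σ₀σ₁)⁻¹
(an isolated vertex contributes one face). -/
noncomputable def numF : ℕ :=
  orbCount (fun a b : ↥G.act => G.ret0 (G.ret1 a) = b) + G.isolated

/-- `k(𝔻)`: the number of connected components (an isolated vertex is a component). -/
noncomputable def numK : ℕ :=
  orbCount (fun a b : ↥G.act => G.ret0 a = b ∨ G.ret1 a = b) + G.isolated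

/-- The nullity `n(𝔻) = e(𝔻) − v(𝔻) + k(𝔻)`. -/
noncomputable def numN : ℕ := G.numE + G.numK - G.numV

/-- The genus `g(𝔻) = (2k(𝔻) − v(𝔻) + e(𝔻) − f(𝔻))/2`. -/
noncomputable def genus : ℕ := (2 * G.numK + G.numE - G.numV - G.numF) / 2

/-- The spanning subgraph `H_S` determined by a set `S` of edges: the active half-edges
are those of `B_S = ⋃_{e ∈ S} e`; the ambient permutations are unchanged. -/
def spanning (S : Finset (Finset B)) : RG B where
  act := G.act.filter fun b => b ∈ S.biUnion id ∧ G.s1 b ∈ S.biUnion id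
  s0 := G.s0
  s1 := G.s1
  invol := G.invol
  fpf := fun b hb => G.fpf b (Finset.mem_filter.1 hb).1
  closed := by
    intro b hb
    rw [Finset.mem_filter] at hb ⊢
    exact ⟨G.closed b hb.1, hb.2.2, by rw [G.invol]; exact hb.2.1⟩

/-- The deletion `𝔻 − e` of the edge `e = {a, σ₁ a}`: the spanning subgraph on the
remaining edges. -/
def del (a : B) : RG B where
  act := G.act \ {a, G.s1 a}
  s0 := G.s0
  s1 := G.s1
  invol := G.invol
  fpf := fun b hb => G.fpf b (Finset.mem_sdiff.1 hb).1
  closed := by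
    intro b hb
    rw [Finset.mem_sdiff, Finset.mem_insert, Finset.mem_singleton] at hb ⊢
    push_neg at hb ⊢
    exact ⟨G.closed b hb.1,
      fun h => absurd (by rw [← h, G.invol] : b = G.s1 a) hb.2.2,
      fun h => absurd (G.s1.injective h) hb.2.1⟩

/-- The contraction `𝔻/e` of the edge `e = {a, σ₁ a}`: the two half-edges of `e` become
inactive and the vertex permutation becomes `τ = σ₀ ∘ (a, σ₁ a)`. -/
def contr (a : B) : RG B where
  act := G.act \ {a, G.s1 a}
  s0 := G.s0 * Equiv.swap a (G.s1 a)
  s1 := G.s1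
  invol := G.invol
  fpf := fun b hb => G.fpf b (Finset.mem_sdiff.1 hb).1
  closed := by
    intro b hb
    rw [Finset.mem_sdiff, Finset.mem_insert, Finset.mem_singleton] at hb ⊢
    push_neg at hb ⊢
    exact ⟨G.closed b hb.1,
      fun h => absurd (by rw [← h, G.invol] : b = G.s1 a) hb.2.2,
      fun h => absurd (G.s1.injective h) hb.2.1⟩

/-- The edge `{a, σ₁ a}` is a loop if its two half-edges lie in the same `σ₀`-orbit. -/
def IsLoop (a : B) : Prop := G.s0.SameCycle a (G.s1 a)

/-- The edge `{a, σ₁ a}` is a bridge if deleting it increases the number of connected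
components by one. -/
noncomputable def IsBridge (a : B) : Prop := (G.del a).numK = G.numK + 1

/-- `δ = −A² − A⁻²`. -/
noncomputable def lDelta : LaurentPolynomial ℤ :=
  -LaurentPolynomial.T 2 - LaurentPolynomial.T (-2)

/-- The Kauffman bracket of a ribbon graph:
`⟨𝔻⟩ = Σ_{S ⊆ E(𝔻)} A^{e(𝔻) − 2|S|} δ^{f(H_S) − 1}`. -/
noncomputable def bracket : LaurentPolynomial ℤ :=
  ∑ S ∈ G.edges.powerset,
    LaurentPolynomial.T ((G.numE : ℤ) - 2 * S.card) * lDelta ^ ((G.spanning S).numF - 1)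

/-- The Bollobás–Riordan–Tutte polynomial (subgraph expansion), in variables
`X = X₀`, `Y = X₁`, `Z = X₂`:
`C(𝔻; X, Y, Z) = Σ_{S ⊆ E(𝔻)} (X−1)^{k(H_S) − k(𝔻)} Y^{n(H_S)} Z^{g(H_S)}`. -/
noncomputable def brt : MvPolynomial (Fin 3) ℤ :=
  ∑ S ∈ G.edges.powerset,
    (MvPolynomial.X 0 - 1) ^ ((G.spanning S).numK - G.numK) *
      MvPolynomial.X 1 ^ (G.spanning S).numN *
      MvPolynomial.X 2 ^ (G.spanning S).genus

/-- Two half-edges lie in the same connected component (where an inactive half-edge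
belongs to the isolated vertex given by its `σ₀`-orbit). -/
def sameComp (x y : B) : Prop :=
  Relation.EqvGen (fun u v => G.s0 u = v ∨ (u ∈ G.act ∧ G.s1 u = v)) x y

/-- `M(H_S) = e(𝔻) − 2|S| + 2 f(H_S) − 2`, the maximal power of `A` contributed by the
spanning subgraph `H_S` to the Kauffman bracket. -/
noncomputable def mVal (S : Finset (Finset B)) : ℤ :=
  (G.numE : ℤ) - 2 * S.card + 2 * (G.spanning S).numF - 2

/-- The spanning trees of `𝔻`: edge sets `T` with `k(H_T) = 1` and `n(H_T) = 0`. -/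
noncomputable def spanningTrees : Finset (Finset (Finset B)) :=
  G.edges.powerset.filter fun T => (G.spanning T).numK = 1 ∧ (G.spanning T).numN = 0

/-- The number `i(T)` of internally active edges of `T`: edges `t ∈ T` that are
`≺`-minimal in their cut `{e ∈ E(𝔻) : k(H_{(T∖{t})∪{e}}) = 1}`. -/
noncomputable def numIntActive [LinearOrder (Finset B)] (T : Finset (Finset B)) : ℕ :=
  (T.filter fun t =>
    ∀ e ∈ G.edges, (G.spanning (insert e (T.erase t))).numK = 1 → t ≤ e).card

/-- The set `𝓔(T)` of externally active edges of `T`: edges `e ∉ T` that are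
`≺`-minimal in `{f ∈ T ∪ {e} : k(H_{(T∪{e})∖{f}}) = 1}`. -/
noncomputable def extActives [LinearOrder (Finset B)] (T : Finset (Finset B)) :
    Finset (Finset B) :=
  G.edges.filter fun e => e ∉ T ∧
    ∀ f ∈ insert e T, (G.spanning ((insert e T).erase f)).numK = 1 → e ≤ f

end RG

open Relation

section OrbitLemmas

variable {α : Type*}

/-- The canonical surjection between quotients when `r ⊆ EqvGen s`. -/
def quotMap {r s : α → α → Prop} (h : ∀ a b, r a b → EqvGen s a b) :
    Quot r → Quot s :=
  Quot.lift (Quot.mk s) fun a b hab => Quot.eqvGen_sound (h a b hab)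

lemma quotMap_surjective {r s : α → α → Prop} (h : ∀ a b, r a b → EqvGen s a b) :
    Function.Surjective (quotMap h) := by
  intro q
  induction q using Quot.ind with | _ a => exact ⟨Quot.mk r a, rfl⟩

lemma orbCount_le [Finite α] {r s : α → α → Prop}
    (h : ∀ a b, r a b → EqvGen s a b) : orbCount s ≤ orbCount r :=
  Nat.card_le_card_of_surjective _ (quotMap_surjective h)

lemma orbCount_eq [Finite α] {r s : α → α → Prop}
    (h1 : ∀ a b, r a b → EqvGen s a b) (h2 : ∀ a b, s a b → EqvGen r a b) :
    orbCount r = orbCount s :=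
  le_antisymm (orbCount_le h2) (orbCount_le h1)

lemma orbCount_congr [Finite α] {r s : α → α → Prop}
    (h : ∀ a b, r a b ↔ s a b) : orbCount r = orbCount s :=
  orbCount_eq (fun a b hab => EqvGen.rel a b ((h a b).2 hab))
    (fun a b hab => EqvGen.rel a b ((h a b).1 hab)) |>.symm ▸ rfl

lemma orbCount_lt [Finite α] {r s : α → α → Prop} {a b : α}
    (h : ∀ x y, r x y → EqvGen s x y) (hs : EqvGen s a b) (hr : ¬ EqvGen r a b) :
    orbCount s < orbCount r := by
  by_contra h'
  push_neg at h'
  have hb := (quotMap_surjective h).bijective_of_nat_card_le h'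
  have : Quot.mk r a = Quot.mk r b :=
    hb.1 (show quotMap h (Quot.mk r a) = quotMap h (Quot.mk r b) from Quot.eqvGen_sound hs)
  exact hr (Quot.eqvGen_exact this)

lemma eqvGen_pair_cases {r : α → α → Prop} {a b x y : α}
    (h : EqvGen (fun x y => r x y ∨ (x = a ∧ y = b)) x y) :
    EqvGen r x y ∨ (EqvGen r x a ∧ EqvGen r b y) ∨ (EqvGen r x b ∧ EqvGen r a y) := by
  induction h with
  | rel u v huv =>
    rcases huv with h | ⟨rfl, rfl⟩
    · exact Or.inl (EqvGen.rel _ _ h)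
    · exact Or.inr (Or.inl ⟨EqvGen.refl _, EqvGen.refl _⟩)
  | refl u => exact Or.inl (EqvGen.refl u)
  | symm u v _ ih =>
    rcases ih with h | ⟨h1, h2⟩ | ⟨h1, h2⟩
    · exact Or.inl h.symm
    · exact Or.inr (Or.inr ⟨h2.symm, h1.symm⟩)
    · exact Or.inr (Or.inl ⟨h2.symm, h1.symm⟩)
  | trans u v w _ _ ih1 ih2 =>
    rcases ih1 with h | ⟨h1, h2⟩ | ⟨h1, h2⟩ <;>
      rcases ih2 with g | ⟨g1, g2⟩ | ⟨g1, g2⟩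
    · exact Or.inl (h.trans _ _ _ g)
    · exact Or.inr (Or.inl ⟨h.trans _ _ _ g1, g2⟩)
    · exact Or.inr (Or.inr ⟨h.trans _ _ _ g1, g2⟩)
    · exact Or.inr (Or.inl ⟨h1, h2.trans _ _ _ g⟩)
    · exact Or.inr (Or.inl ⟨h1, g2⟩)
    · exact Or.inl (h1.trans _ _ _ g2)
    · exact Or.inr (Or.inr ⟨h1, h2.trans _ _ _ g⟩)
    · exact Or.inl (h1.trans _ _ _ g2)
    · exact Or.inr (Or.inr ⟨h1, g2⟩)

lemma orbCount_le_pair_add_one [Finite α] (r : α → α → Prop) (a b : α) :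
    orbCount r ≤ orbCount (fun x y => r x y ∨ (x = a ∧ y = b)) + 1 := by
  classical
  set s := fun x y => r x y ∨ (x = a ∧ y = b) with hs
  have hrs : ∀ x y, r x y → EqvGen s x y := fun x y h => EqvGen.rel x y (Or.inl h)
  set f := quotMap hrs with hf
  have key : ∀ x y : Quot r, f x = f y →
      x = y ∨ (x = Quot.mk r a ∧ y = Quot.mk r b) ∨ (x = Quot.mk r b ∧ y = Quot.mk r a) := by
    intro x y
    induction x using Quot.ind with | _ u =>
    induction y using Quot.ind with | _ v =>
    intro hxy
    have := Quot.eqvGen_exact (r := s) hxy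
    rcases eqvGen_pair_cases this with h | ⟨h1, h2⟩ | ⟨h1, h2⟩
    · exact Or.inl (Quot.eqvGen_sound h)
    · exact Or.inr (Or.inl ⟨Quot.eqvGen_sound h1, (Quot.eqvGen_sound h2).symm⟩)
    · exact Or.inr (Or.inr ⟨Quot.eqvGen_sound h1, (Quot.eqvGen_sound h2).symm⟩)
  have hinj : Function.Injective (fun z : {q : Quot r // q ≠ Quot.mk r a} => f z.1) := by
    rintro ⟨x, hx⟩ ⟨y, hy⟩ hxy
    rcases key x y hxy with h | ⟨h1, _⟩ | ⟨_, h2⟩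
    · exact Subtype.ext h
    · exact absurd h1 hx
    · exact absurd h2 hy
  have h1 : Nat.card {q : Quot r // q ≠ Quot.mk r a} ≤ Nat.card (Quot s) :=
    Nat.card_le_card_of_injective _ hinj
  have h2 : Nat.card (Quot r) = Nat.card {q : Quot r // q ≠ Quot.mk r a} + 1 := by
    rw [← Finite.card_option]
    exact (Nat.card_congr (Equiv.optionSubtypeNe (Quot.mk r a))).symm
  show Nat.card (Quot r) ≤ Nat.card (Quot s) + 1
  omega

end OrbitLemmas
section PermLemmas

variable {α : Type*} [DecidableEq α]

omit [DecidableEq α] in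
lemma eqvGen_perm_of_pow {σ : Equiv.Perm α} :
    ∀ (n : ℕ) (x : α), EqvGen (fun a b => σ a = b) x ((σ ^ n) x) := by
  intro n
  induction n with
  | zero => intro x; simpa using EqvGen.refl x
  | succ n ih =>
    intro x
    have h1 : EqvGen (fun a b => σ a = b) x (σ x) := EqvGen.rel _ _ rfl
    have h2 := ih (σ x)
    rw [← Equiv.Perm.mul_apply, ← pow_succ] at h2
    exact h1.trans _ _ _ h2

lemma eqvGen_perm_iff [Finite α] (σ : Equiv.Perm α) (x y : α) :
    EqvGen (fun a b => σ a = b) x y ↔ σ.SameCycle x y := by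
  constructor
  · intro h
    induction h with
    | rel u v huv => exact ⟨1, by simpa using huv⟩
    | refl u => exact Equiv.Perm.SameCycle.refl σ u
    | symm u v _ ih => exact ih.symm
    | trans u v w _ _ ih1 ih2 => exact ih1.trans ih2
  · intro h
    obtain ⟨i, _, hi⟩ := h.exists_pow_eq'
    exact hi ▸ eqvGen_perm_of_pow i x

lemma pow_swap_mul_agree (γ : Equiv.Perm α) (a b c : α) (n : ℕ)
    (h : ∀ j, 0 < j → j < n → (γ ^ j) c ≠ a ∧ (γ ^ j) c ≠ b) :
    ∀ j < n, ((Equiv.swap a b * γ) ^ j) c = (γ ^ j) c := by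
  intro j
  induction j with
  | zero => intro _; rfl
  | succ j ih =>
    intro hj
    have h1 : ((Equiv.swap a b * γ) ^ (j + 1)) c
        = (Equiv.swap a b * γ) (((Equiv.swap a b * γ) ^ j) c) := by
      rw [pow_succ', Equiv.Perm.mul_apply]
    rw [h1, ih (by omega), Equiv.Perm.mul_apply, ← Equiv.Perm.mul_apply γ, ← pow_succ']
    exact Equiv.swap_apply_of_ne_of_ne (h (j+1) (by omega) hj).1 (h (j+1) (by omega) hj).2

lemma sameCycle_swap_mul_of_not [Finite α] {γ : Equiv.Perm α} {a b : α} (hab : a ≠ b)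
    (h : ¬ γ.SameCycle a b) : (Equiv.swap a b * γ).SameCycle a b := by
  have hex : ∃ m, 0 < m ∧ (γ ^ m) a = a :=
    ⟨orderOf γ, orderOf_pos γ, by rw [pow_orderOf_eq_one]; rfl⟩
  obtain ⟨n, ⟨hn0, hna⟩, hminw⟩ :
      ∃ n, (0 < n ∧ (γ ^ n) a = a) ∧ ∀ j < n, ¬(0 < j ∧ (γ ^ j) a = a) :=
    ⟨Nat.find hex, Nat.find_spec hex, fun j hj => Nat.find_min hex hj⟩
  have hmin : ∀ j, 0 < j → j < n → (γ ^ j) a ≠ a := by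
    intro j hj hjn he
    exact hminw j hjn ⟨hj, he⟩
  have hnotb : ∀ j, (γ ^ j) a ≠ b := by
    intro j he
    exact h ⟨(j : ℤ), by rw [zpow_natCast]; exact he⟩
  have hagree := pow_swap_mul_agree γ a b a n (fun j hj hjn => ⟨hmin j hj hjn, hnotb j⟩)
  refine ⟨(n : ℤ), ?_⟩
  rw [zpow_natCast]
  obtain ⟨m, rfl⟩ : ∃ m, n = m + 1 := ⟨n - 1, by omega⟩
  rw [pow_succ', Equiv.Perm.mul_apply, hagree m (by omega), Equiv.Perm.mul_apply,
    ← Equiv.Perm.mul_apply γ, ← pow_succ', hna]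
  exact Equiv.swap_apply_left a b

lemma not_sameCycle_swap_mul_of [Finite α] {γ : Equiv.Perm α} {a b : α} (hab : a ≠ b)
    (h : γ.SameCycle a b) : ¬ (Equiv.swap a b * γ).SameCycle a b := by
  obtain ⟨i, _, hi⟩ := h.exists_pow_eq'
  have hex : ∃ m, 0 < m ∧ (γ ^ m) a = b := by
    refine ⟨i, ?_, hi⟩
    rcases Nat.eq_zero_or_pos i with rfl | hpos
    · exact absurd hi hab
    · exact hpos
  obtain ⟨m, ⟨hm0, hmb⟩, hminw⟩ :
      ∃ m, (0 < m ∧ (γ ^ m) a = b) ∧ ∀ j < m, ¬(0 < j ∧ (γ ^ j) a = b) :=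
    ⟨Nat.find hex, Nat.find_spec hex, fun j hj => Nat.find_min hex hj⟩
  have hminb : ∀ j, 0 < j → j < m → (γ ^ j) a ≠ b := by
    intro j hj hjm he
    exact hminw j hjm ⟨hj, he⟩
  have hnota : ∀ j, 0 < j → j < m → (γ ^ j) a ≠ a := by
    intro j hj hjm he
    have hsub : (γ ^ (m - j)) a = b := by
      have h2 : (γ ^ (m - j)) ((γ ^ j) a) = (γ ^ m) a := by
        rw [← Equiv.Perm.mul_apply, ← pow_add, Nat.sub_add_cancel hjm.le]
      rw [he] at h2
      rw [h2, hmb]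
    have hne : j ≠ m := by
      intro hc
      rw [hc, Nat.sub_self, pow_zero] at hsub
      exact hab hsub
    exact hminb (m - j) (by omega) (by omega) hsub
  have hagree := pow_swap_mul_agree γ a b a m
    (fun j hj hjm => ⟨hnota j hj hjm, hminb j hj hjm⟩)
  set γ' := Equiv.swap a b * γ with hγ'
  have hper : (γ' ^ m) a = a := by
    obtain ⟨k, rfl⟩ : ∃ k, m = k + 1 := ⟨m - 1, by omega⟩
    rw [pow_succ', Equiv.Perm.mul_apply, hagree k (by omega), hγ', Equiv.Perm.mul_apply,
      ← Equiv.Perm.mul_apply γ, ← pow_succ', hmb]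
    exact Equiv.swap_apply_right a b
  intro hsc
  obtain ⟨i', _, hi'⟩ := hsc.exists_pow_eq'
  have hq : ∀ q : ℕ, ((γ' ^ m) ^ q) a = a := by
    intro q
    induction q with
    | zero => rfl
    | succ q ih => rw [pow_succ, Equiv.Perm.mul_apply, hper, ih]
  have hmod : (γ' ^ (i' % m)) a = b := by
    conv at hi' => rw [← Nat.mod_add_div i' m]
    rw [pow_add, Equiv.Perm.mul_apply, pow_mul, hq] at hi'
    exact hi'
  have hrm : i' % m < m := Nat.mod_lt _ hm0
  rcases Nat.eq_zero_or_pos (i' % m) with hz | hpos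
  · rw [hz] at hmod
    exact hab hmod
  · rw [hagree _ hrm] at hmod
    exact hminb _ hpos hrm hmod

end PermLemmas
section MainInd

variable {α : Type*} [DecidableEq α]

lemma eqvGen_trans_of {r s : α → α → Prop} (h : ∀ a b, r a b → EqvGen s a b)
    {x y : α} (hxy : EqvGen r x y) : EqvGen s x y := by
  induction hxy with
  | rel u v huv => exact h u v huv
  | refl u => exact EqvGen.refl u
  | symm u v _ ih => exact ih.symm
  | trans u v w _ _ ih1 ih2 => exact ih1.trans _ _ _ ih2

lemma eqvGen_pair_swap (τ : Equiv.Perm α) (a b : α) (x : α) :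
    EqvGen (fun x y => τ x = y ∨ (x = a ∧ y = b)) x (Equiv.swap a b x) := by
  by_cases hxa : x = a
  · rw [hxa, Equiv.swap_apply_left]
    exact EqvGen.rel a b (Or.inr ⟨rfl, rfl⟩)
  by_cases hxb : x = b
  · rw [hxb, Equiv.swap_apply_right]
    exact EqvGen.symm a b (EqvGen.rel a b (Or.inr ⟨rfl, rfl⟩))
  · rw [Equiv.swap_apply_of_ne_of_ne hxa hxb]
    exact EqvGen.refl x

lemma orbCount_pair_swap_mul [Finite α] (γ : Equiv.Perm α) (a b : α) :
    orbCount (fun x y => γ x = y ∨ (x = a ∧ y = b)) =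
      orbCount (fun x y => (Equiv.swap a b * γ) x = y ∨ (x = a ∧ y = b)) := by
  apply orbCount_eq
  · rintro x y (rfl | ⟨rfl, rfl⟩)
    · refine (EqvGen.rel x ((Equiv.swap a b * γ) x) (Or.inl rfl)).trans _ _ _ ?_
      have := (eqvGen_pair_swap (Equiv.swap a b * γ) a b (γ x)).symm _ _
      rwa [show Equiv.swap a b (γ x) = (Equiv.swap a b * γ) x from rfl] at this
    · exact EqvGen.rel _ _ (Or.inr ⟨rfl, rfl⟩)
  · rintro x y (rfl | ⟨rfl, rfl⟩)
    · refine (EqvGen.rel x (γ x) (Or.inl rfl)).trans _ _ _ ?_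
      exact eqvGen_pair_swap γ a b (γ x)
    · exact EqvGen.rel _ _ (Or.inr ⟨rfl, rfl⟩)

lemma orbCount_pair_eq_of_sameCycle [Finite α] {γ : Equiv.Perm α} {a b : α}
    (h : γ.SameCycle a b) :
    orbCount (fun x y => γ x = y) = orbCount (fun x y => γ x = y ∨ (x = a ∧ y = b)) := by
  apply orbCount_eq
  · rintro x y rfl
    exact EqvGen.rel _ _ (Or.inl rfl)
  · rintro x y (rfl | ⟨rfl, rfl⟩)
    · exact EqvGen.rel _ _ rfl
    · exact (eqvGen_perm_iff γ x y).2 h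

lemma orbCount_pair_lt_of_not_sameCycle [Finite α] {γ : Equiv.Perm α} {a b : α}
    (h : ¬ γ.SameCycle a b) :
    orbCount (fun x y => γ x = y ∨ (x = a ∧ y = b)) < orbCount (fun x y => γ x = y) := by
  apply orbCount_lt (a := a) (b := b)
  · rintro x y rfl
    exact EqvGen.rel _ _ (Or.inl rfl)
  · exact EqvGen.rel _ _ (Or.inr ⟨rfl, rfl⟩)
  · exact fun hc => h ((eqvGen_perm_iff γ a b).1 hc)

/-- The product of swaps determined by a list of pairs. -/
def swProd (l : List (α × α)) : Equiv.Perm α :=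
  (l.map fun p => Equiv.swap p.1 p.2).prod

@[simp] lemma swProd_nil : swProd ([] : List (α × α)) = 1 := rfl

lemma swProd_cons (p : α × α) (t : List (α × α)) :
    swProd (p :: t) = Equiv.swap p.1 p.2 * swProd t := by
  simp [swProd]

lemma eqvGen_kRel_apply (σ : Equiv.Perm α) :
    ∀ (l : List (α × α)) (x : α),
      EqvGen (fun x y => σ x = y ∨ (x, y) ∈ l) x ((swProd l * σ) x) := by
  intro l
  induction l with
  | nil =>
    intro x
    have h : EqvGen (fun a b => σ a = b ∨ (a, b) ∈ ([] : List (α × α))) x (σ x) :=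
      EqvGen.rel _ _ (Or.inl rfl)
    simpa using h
  | cons p t ih =>
    intro x
    have h1 : EqvGen (fun x y => σ x = y ∨ (x, y) ∈ p :: t) x ((swProd t * σ) x) := by
      refine eqvGen_trans_of ?_ (ih x)
      rintro u v (h | h)
      · exact EqvGen.rel _ _ (Or.inl h)
      · exact EqvGen.rel _ _ (Or.inr (List.mem_cons_of_mem p h))
    have h2 : EqvGen (fun x y => σ x = y ∨ (x, y) ∈ p :: t)
        ((swProd t * σ) x) ((swProd (p :: t) * σ) x) := by
      rw [swProd_cons, mul_assoc]
      refine eqvGen_trans_of ?_ (eqvGen_pair_swap 1 p.1 p.2 ((swProd t * σ) x))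
      rintro u v (h | ⟨rfl, rfl⟩)
      · simp at h; exact h ▸ EqvGen.refl u
      · exact EqvGen.rel _ _ (Or.inr (List.mem_cons_self))
    exact h1.trans _ _ _ h2

lemma main_ind [Finite α] (σ : Equiv.Perm α) :
    ∀ l : List (α × α), (∀ p ∈ l, p.1 ≠ p.2) →
      orbCount (fun x y => σ x = y) + orbCount (fun x y => (swProd l * σ) x = y)
          ≤ 2 * orbCount (fun x y => σ x = y ∨ (x, y) ∈ l) + l.length ∧
        (orbCount (fun x y => (swProd l * σ) x = y) + l.length) % 2
          = orbCount (fun x y => σ x = y) % 2 := by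
  intro l
  induction l with
  | nil =>
    intro _
    have h1 : orbCount (fun x y => (swProd ([] : List (α × α)) * σ) x = y)
        = orbCount (fun x y => σ x = y) := by
      apply orbCount_congr; intro x y; simp
    have h2 : orbCount (fun x y => σ x = y ∨ (x, y) ∈ ([] : List (α × α)))
        = orbCount (fun x y => σ x = y) := by
      apply orbCount_congr; intro x y; simp
    rw [h1, h2]
    simp only [List.length_nil]
    omega
  | cons p t ih =>
    intro hne
    obtain ⟨a, b⟩ := p
    have hab : a ≠ b := hne (a, b) (List.mem_cons_self)
    have iht := ih (fun q hq => hne q (List.mem_cons_of_mem _ hq))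
    set γt := swProd t * σ with hγt
    have hγl : swProd ((a, b) :: t) * σ = Equiv.swap a b * γt := by
      rw [swProd_cons, mul_assoc]
    rw [hγl]
    set γl := Equiv.swap a b * γt with hγldef
    -- K values
    have hKeq : orbCount (fun x y => γt x = y ∨ (x = a ∧ y = b))
        = orbCount (fun x y => γl x = y ∨ (x = a ∧ y = b)) :=
      orbCount_pair_swap_mul γt a b
    -- the k-relation of the longer list
    have hkcons : orbCount (fun x y => σ x = y ∨ (x, y) ∈ (a, b) :: t)
        = orbCount (fun x y => (σ x = y ∨ (x, y) ∈ t) ∨ (x = a ∧ y = b)) := by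
      apply orbCount_congr
      intro x y
      constructor
      · rintro (h | h)
        · exact Or.inl (Or.inl h)
        · rcases List.mem_cons.1 h with h | h
          · exact Or.inr ⟨congrArg Prod.fst h, congrArg Prod.snd h⟩
          · exact Or.inl (Or.inr h)
      · rintro ((h | h) | ⟨rfl, rfl⟩)
        · exact Or.inl h
        · exact Or.inr (List.mem_cons_of_mem _ h)
        · exact Or.inr (List.mem_cons_self)
    have hkmerge : orbCount (fun x y => σ x = y ∨ (x, y) ∈ t)
        ≤ orbCount (fun x y => (σ x = y ∨ (x, y) ∈ t) ∨ (x = a ∧ y = b)) + 1 :=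
      orbCount_le_pair_add_one _ a b
    by_cases hsc : γt.SameCycle a b
    · -- split case: cycle count goes up by one, components unchanged
      have hsplit : ¬ γl.SameCycle a b := not_sameCycle_swap_mul_of hab hsc
      have h1 : orbCount (fun x y => γl x = y ∨ (x = a ∧ y = b))
          < orbCount (fun x y => γl x = y) := orbCount_pair_lt_of_not_sameCycle hsplit
      have h2 : orbCount (fun x y => γl x = y)
          ≤ orbCount (fun x y => γl x = y ∨ (x = a ∧ y = b)) + 1 :=
        orbCount_le_pair_add_one _ a b
      have h3 : orbCount (fun x y => γt x = y)
          = orbCount (fun x y => γt x = y ∨ (x = a ∧ y = b)) :=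
        orbCount_pair_eq_of_sameCycle hsc
      -- components unchanged
      have hkeq : orbCount (fun x y => (σ x = y ∨ (x, y) ∈ t) ∨ (x = a ∧ y = b))
          = orbCount (fun x y => σ x = y ∨ (x, y) ∈ t) := by
        apply orbCount_eq
        · rintro x y ((h | h) | ⟨ha, hb⟩)
          · exact EqvGen.rel _ _ (Or.inl h)
          · exact EqvGen.rel _ _ (Or.inr h)
          · -- a and b lie in the same component already
            rw [ha, hb]
            have hsc' := (eqvGen_perm_iff γt a b).2 hsc
            refine eqvGen_trans_of ?_ hsc'
            rintro u v rfl
            exact eqvGen_kRel_apply σ t u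
        · rintro x y (h | h)
          · exact EqvGen.rel _ _ (Or.inl (Or.inl h))
          · exact EqvGen.rel _ _ (Or.inl (Or.inr h))
      rw [hkcons, hkeq]
      simp only [List.length_cons]
      omega
    · -- merge case: cycle count goes down by one, components may merge
      have hmerge : γl.SameCycle a b := sameCycle_swap_mul_of_not hab hsc
      have h1 : orbCount (fun x y => γt x = y ∨ (x = a ∧ y = b))
          < orbCount (fun x y => γt x = y) := orbCount_pair_lt_of_not_sameCycle hsc
      have h2 : orbCount (fun x y => γt x = y)
          ≤ orbCount (fun x y => γt x = y ∨ (x = a ∧ y = b)) + 1 :=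
        orbCount_le_pair_add_one _ a b
      have h3 : orbCount (fun x y => γl x = y)
          = orbCount (fun x y => γl x = y ∨ (x = a ∧ y = b)) :=
        orbCount_pair_eq_of_sameCycle hmerge
      rw [hkcons]
      simp only [List.length_cons]
      omega

end MainInd
section Decomp

variable {B : Type} [Fintype B] [DecidableEq B]

lemma orbCount_inv (σ : Equiv.Perm B) :
    orbCount (fun a b => σ⁻¹ a = b) = orbCount (fun a b => σ a = b) := by
  apply orbCount_eq
  · rintro a b rfl
    have h : EqvGen (fun a b => σ a = b) (σ⁻¹ a) a :=
      EqvGen.rel _ _ (Equiv.apply_symm_apply σ a)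
    exact h.symm _ _
  · rintro a b rfl
    have h : EqvGen (fun a b => σ⁻¹ a = b) (σ a) a :=
      EqvGen.rel _ _ (Equiv.symm_apply_apply σ a)
    exact h.symm _ _

lemma orbCount_conj (g σ : Equiv.Perm B) :
    orbCount (fun a b => (g * σ * g⁻¹) a = b) = orbCount (fun a b => σ a = b) := by
  have hfwd : ∀ a b : B, σ a = b → (g * σ * g⁻¹) (g a) = g b := by
    intro a b h
    simp [Equiv.Perm.mul_apply, h]
  have hbwd : ∀ a b : B, (g * σ * g⁻¹) a = b → σ (g⁻¹ a) = g⁻¹ b := by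
    intro a b h
    simp only [Equiv.Perm.mul_apply] at h
    rw [← h]
    simp
  set r := fun a b : B => σ a = b
  set s := fun a b : B => (g * σ * g⁻¹) a = b
  have hs1 : Function.Surjective
      (Quot.lift (fun a => Quot.mk s (g a)) (fun a b h => Quot.sound (hfwd a b h)) :
        Quot r → Quot s) := by
    intro q
    induction q using Quot.ind with | _ a =>
    refine ⟨Quot.mk r (g⁻¹ a), ?_⟩
    show Quot.mk s (g (g⁻¹ a)) = Quot.mk s a
    rw [← Equiv.Perm.mul_apply, mul_inv_cancel, Equiv.Perm.one_apply]
  have hs2 : Function.Surjective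
      (Quot.lift (fun a => Quot.mk r (g⁻¹ a)) (fun a b h => Quot.sound (hbwd a b h)) :
        Quot s → Quot r) := by
    intro q
    induction q using Quot.ind with | _ a =>
    refine ⟨Quot.mk s (g a), ?_⟩
    show Quot.mk r (g⁻¹ (g a)) = Quot.mk r a
    rw [← Equiv.Perm.mul_apply, inv_mul_cancel, Equiv.Perm.one_apply]
  exact le_antisymm (Nat.card_le_card_of_surjective _ hs1)
    (Nat.card_le_card_of_surjective _ hs2)

lemma swProd_eval (σ₁ : Equiv.Perm B) (hinv : ∀ b, σ₁ (σ₁ b) = b) :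
    ∀ L : List B, (L.Pairwise fun x y => x ≠ y ∧ x ≠ σ₁ y) →
      ∀ b, ((L.map fun x => Equiv.swap x (σ₁ x)).prod) b
        = if b ∈ L ∨ σ₁ b ∈ L then σ₁ b else b := by
  intro L
  induction L with
  | nil => intro _ b; simp
  | cons x T ih =>
    intro hp b
    rw [List.pairwise_cons] at hp
    obtain ⟨hx, hT⟩ := hp
    have hstep : ((List.map (fun x => Equiv.swap x (σ₁ x)) (x :: T)).prod) b
        = Equiv.swap x (σ₁ x) (((List.map (fun x => Equiv.swap x (σ₁ x)) T).prod) b) := by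
      rw [List.map_cons, List.prod_cons, Equiv.Perm.mul_apply]
    rw [hstep, ih hT b]
    by_cases hbT : b ∈ T ∨ σ₁ b ∈ T
    · rw [if_pos hbT]
      have hne1 : σ₁ b ≠ x ∧ σ₁ b ≠ σ₁ x := by
        rcases hbT with h | h
        · obtain ⟨h1, h2⟩ := hx b h
          exact ⟨fun hc => h2 hc.symm, fun hc => h1 (σ₁.injective hc).symm⟩
        · obtain ⟨h1, h2⟩ := hx (σ₁ b) h
          rw [hinv b] at h2
          exact ⟨fun hc => h1 hc.symm, fun hc => h2 (σ₁.injective hc).symm⟩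
      rw [Equiv.swap_apply_of_ne_of_ne hne1.1 hne1.2,
        if_pos (by rcases hbT with h | h
                   · exact Or.inl (List.mem_cons_of_mem _ h)
                   · exact Or.inr (List.mem_cons_of_mem _ h))]
    · rw [if_neg hbT]
      push_neg at hbT
      by_cases hbx : b = x
      · rw [hbx, Equiv.swap_apply_left, if_pos (Or.inl (List.mem_cons_self))]
      by_cases hbsx : b = σ₁ x
      · have hsb : σ₁ b = x := by rw [hbsx, hinv]
        have hcond : b ∈ x :: T ∨ σ₁ b ∈ x :: T := Or.inr (by rw [hsb]; exact List.mem_cons_self)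
        have h2 : Equiv.swap x (σ₁ x) b = σ₁ b := by
          rw [hbsx, Equiv.swap_apply_right, hinv]
        rw [h2, if_pos hcond]
      · rw [Equiv.swap_apply_of_ne_of_ne hbx hbsx]
        rw [if_neg]
        rintro (h | h)
        · rcases List.mem_cons.1 h with h | h
          · exact hbx h
          · exact hbT.1 h
        · rcases List.mem_cons.1 h with h | h
          · exact hbsx (by rw [← hinv b, h])
          · exact hbT.2 h

lemma exists_swap_list (σ₁ : Equiv.Perm B)
    (hinv : ∀ b, σ₁ (σ₁ b) = b) (hfpf : ∀ b, σ₁ b ≠ b) :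
    ∃ l : List (B × B),
      (∀ p ∈ l, p.1 ≠ p.2) ∧
      swProd l = σ₁ ∧
      (∀ b : B, (b, σ₁ b) ∈ l ∨ (σ₁ b, b) ∈ l) ∧
      (∀ p ∈ l, p.2 = σ₁ p.1) ∧
      l.length = orbCount (fun a b => σ₁ a = b) := by
  classical
  letI : LinearOrder B := LinearOrder.lift' _ (Fintype.equivFin B).injective
  set rep : B → B := fun b => ({b, σ₁ b} : Finset B).min' ⟨b, Finset.mem_insert_self b _⟩
    with hrepdef
  have hrep_mem : ∀ b, rep b = b ∨ rep b = σ₁ b := by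
    intro b
    have := Finset.min'_mem ({b, σ₁ b} : Finset B) ⟨b, Finset.mem_insert_self b _⟩
    simpa [Finset.mem_insert, Finset.mem_singleton] using this
  have hrep_s1 : ∀ b, rep (σ₁ b) = rep b := by
    intro b
    have hset : ({σ₁ b, σ₁ (σ₁ b)} : Finset B) = {b, σ₁ b} := by
      rw [hinv b, Finset.pair_comm]
    simp only [hrepdef]
    congr 1
  have hrep_idem : ∀ b, rep (rep b) = rep b := by
    intro b
    rcases hrep_mem b with h | h
    · rw [h]
      exact h
    · rw [h, hrep_s1]
      rw [← h]
  set R : Finset B := Finset.univ.filter fun b => rep b = b with hR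
  have hmemR : ∀ x, x ∈ R ↔ rep x = x := by
    intro x
    simp [hR]
  refine ⟨R.toList.map fun x => (x, σ₁ x), ?_, ?_, ?_, ?_, ?_⟩
  · rintro p hp
    obtain ⟨x, _, rfl⟩ := List.mem_map.1 hp
    exact fun h => hfpf x h.symm
  · -- the product is σ₁
    have hpw : R.toList.Pairwise fun x y => x ≠ y ∧ x ≠ σ₁ y := by
      refine List.Pairwise.imp_of_mem ?_ (R.nodup_toList)
      intro x y hxm hym hxy
      refine ⟨hxy, fun hc => hxy ?_⟩
      have hx := (hmemR x).1 (Finset.mem_toList.1 hxm)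
      have hy := (hmemR y).1 (Finset.mem_toList.1 hym)
      rw [← hx, hc, hrep_s1, hy]
    have hcover : ∀ b : B, b ∈ R.toList ∨ σ₁ b ∈ R.toList := by
      intro b
      rcases hrep_mem b with h | h
      · exact Or.inl (Finset.mem_toList.2 ((hmemR b).2 h))
      · refine Or.inr (Finset.mem_toList.2 ((hmemR (σ₁ b)).2 ?_))
        rw [hrep_s1, h]
    ext b
    rw [show swProd (R.toList.map fun x => (x, σ₁ x))
        = ((R.toList.map fun x => Equiv.swap x (σ₁ x))).prod by
      simp [swProd, List.map_map]; rfl]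
    rw [swProd_eval σ₁ hinv R.toList hpw b, if_pos (hcover b)]
  · intro b
    rcases hrep_mem b with h | h
    · exact Or.inl (List.mem_map.2 ⟨b, Finset.mem_toList.2 ((hmemR b).2 h), rfl⟩)
    · refine Or.inr (List.mem_map.2 ⟨σ₁ b, Finset.mem_toList.2 ((hmemR (σ₁ b)).2 ?_), ?_⟩)
      · rw [hrep_s1, h]
      · rw [hinv b]
  · rintro p hp
    obtain ⟨x, _, rfl⟩ := List.mem_map.1 hp
    rfl
  · -- length equals the number of σ₁-orbits
    rw [List.length_map, Finset.length_toList]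
    have hsound : ∀ a b : B, σ₁ a = b → rep a = rep b := by
      rintro a b rfl
      exact (hrep_s1 a).symm
    have hs1 : Function.Surjective
        (Quot.lift (fun a => (⟨rep a, (hmemR _).2 (hrep_idem a)⟩ : {x // x ∈ R}))
          (fun a b h => Subtype.ext (hsound a b h)) :
            Quot (fun a b : B => σ₁ a = b) → {x // x ∈ R}) := by
      rintro ⟨x, hx⟩
      exact ⟨Quot.mk _ x, Subtype.ext ((hmemR x).1 hx)⟩
    have hs2 : Function.Surjective
        (fun x : {x // x ∈ R} => Quot.mk (fun a b : B => σ₁ a = b) x.1) := by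
      intro q
      induction q using Quot.ind with | _ a =>
      refine ⟨⟨rep a, (hmemR _).2 (hrep_idem a)⟩, ?_⟩
      show Quot.mk _ (rep a) = Quot.mk _ a
      rcases hrep_mem a with h | h
      · rw [h]
      · rw [h]
        exact (Quot.sound (r := fun a b : B => σ₁ a = b) rfl).symm
    have h1 := Nat.card_le_card_of_surjective _ hs1
    have h2 := Nat.card_le_card_of_surjective _ hs2
    have h3 : Nat.card (Quot (fun a b : B => σ₁ a = b)) = Nat.card {x // x ∈ R} :=
      le_antisymm h2 h1
    have h4 : Nat.card {x // x ∈ R} = R.card := Nat.card_eq_finsetCard R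
    rw [show orbCount (fun a b : B => σ₁ a = b)
      = Nat.card (Quot (fun a b : B => σ₁ a = b)) from rfl, h3, h4]

end Decomp

/-- For any oriented ribbon graph `𝔻`, the quantity `v(𝔻) − e(𝔻) + f(𝔻)` is
even and at most `2k(𝔻)`; equivalently the genus `g(𝔻) = (2k − v + e − f)/2` is a
nonnegative integer. -/
theorem ribbonGraph_genus_nonneg (D : RibbonGraph B) :
    Even ((D.vN : ℤ) - D.eN + D.fN) ∧ (D.vN : ℤ) - D.eN + D.fN ≤ 2 * D.kN := by
  classical
  obtain ⟨l, hne, hprod, hcov, hsnd, hlen⟩ := exists_swap_list D.s1 D.invol D.fpf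
  obtain ⟨hineq, hpar⟩ := main_ind D.s0 l hne
  have hv : D.vN = orbCount fun a b : B => D.s0 a = b := rfl
  have he : D.eN = l.length := hlen.symm
  have hk : D.kN = orbCount fun x y : B => D.s0 x = y ∨ (x, y) ∈ l := by
    show orbCount (fun a b : B => D.s0 a = b ∨ D.s1 a = b) = _
    apply orbCount_eq
    · rintro x y (h | h)
      · exact EqvGen.rel _ _ (Or.inl h)
      · subst h
        rcases hcov x with hc | hc
        · exact EqvGen.rel _ _ (Or.inr hc)
        · exact (EqvGen.rel (D.s1 x) x (Or.inr hc)).symm _ _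
    · rintro x y (h | h)
      · exact EqvGen.rel _ _ (Or.inl h)
      · exact EqvGen.rel _ _ (Or.inr (hsnd (x, y) h).symm)
  have hmul : D.s0 * D.s1 * D.s2 = 1 := Equiv.ext fun b => D.triple b
  have hs2 : D.s2 = (D.s0 * D.s1)⁻¹ := eq_inv_of_mul_eq_one_right hmul
  have hf1 : D.fN = orbCount fun a b : B => (D.s0 * D.s1) a = b := by
    show orbCount (fun a b : B => D.s2 a = b) = _
    rw [hs2]
    exact orbCount_inv (D.s0 * D.s1)
  have hconj : D.s1 * (D.s0 * D.s1) * D.s1⁻¹ = D.s1 * D.s0 := by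
    rw [mul_assoc (D.s1) (D.s0 * D.s1), mul_inv_cancel_right]
  have hf2 := orbCount_conj D.s1 (D.s0 * D.s1)
  rw [hconj] at hf2
  have hfin : D.fN = orbCount fun x y : B => (swProd l * D.s0) x = y := by
    rw [hprod, hf1]
    exact hf2.symm
  have hineq' : D.vN + D.fN ≤ 2 * D.kN + D.eN := by
    rw [hv, hfin, hk, he]
    exact hineq
  have hpar' : (D.fN + D.eN) % 2 = D.vN % 2 := by
    rw [hv, hfin, he]
    exact hpar
  constructor
  · rw [Int.even_iff]
    omega
  · omega
end

section
/- Let 𝔻 be an oriented ribbon graph and let e ∈ E(𝔻) be an edge that is not a loop. Then the bracket satisfies the skein relation ⟨𝔻⟩ = A · ⟨𝔻 − e⟩ + A⁻¹ · ⟨𝔻/e⟩ in ℤ[A, A⁻¹]. -/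
open Equiv Finset

variable {B : Type} [Fintype B] [DecidableEq B]

section SkeinAux

open Equiv LaurentPolynomial

variable {B : Type} [Fintype B] [DecidableEq B]

lemma skein_quotMk_eq_iff (σ : Equiv.Perm B) (x y : B) :
    Quot.mk (fun a b : B => σ a = b) x = Quot.mk (fun a b : B => σ a = b) y ↔
      σ.SameCycle x y := by
  constructor
  · intro h
    exact ((Equiv.Perm.SameCycle.equivalence σ).eqvGen_iff).1
      (Relation.EqvGen.mono (fun a b hab => ⟨1, by simpa using hab⟩) _ _ (Quot.eqvGen_exact h))
  · intro h
    obtain ⟨n, -, rfl⟩ := h.exists_pow_eq'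
    clear h
    induction n with
    | zero => exact congrArg _ (Eq.symm (by simp))
    | succ k ih =>
      refine ih.trans (Quot.sound ?_)
      show σ ((σ ^ k) x) = (σ ^ (k + 1)) x
      rw [pow_succ', Equiv.Perm.mul_apply]

lemma skein_firstRet_coe (σ : Equiv.Perm B) (P : Finset B) (b : ↥P) :
    ∃ m : ℕ, 0 < m ∧ (σ ^ m) (b : B) ∈ P ∧ ((firstRet σ P b : B) = (σ ^ m) (b : B)) ∧
      ∀ j, 0 < j → j < m → (σ ^ j) (b : B) ∉ P := by
  have h : ∃ m, 0 < m ∧ (σ ^ m) (b : B) ∈ P :=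
    ⟨orderOf σ, orderOf_pos σ, by rw [pow_orderOf_eq_one]; simpa using b.2⟩
  exact ⟨Nat.find h, (Nat.find_spec h).1, (Nat.find_spec h).2, rfl,
    fun j hj1 hj2 hmem => Nat.find_min h hj2 ⟨hj1, hmem⟩⟩

lemma skein_firstRet_unique (σ : Equiv.Perm B) (P : Finset B) (b : ↥P) {m : ℕ}
    (hm : 0 < m) (h1 : (σ ^ m) (b : B) ∈ P)
    (h2 : ∀ j, 0 < j → j < m → (σ ^ j) (b : B) ∉ P) :
    (firstRet σ P b : B) = (σ ^ m) (b : B) := by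
  obtain ⟨k, hk0, hkP, hkeq, hkmin⟩ := skein_firstRet_coe σ P b
  have hkm : k = m :=
    le_antisymm (by_contra fun h => (hkmin m hm (lt_of_not_ge h)) h1)
      (by_contra fun h => (h2 k hk0 (lt_of_not_ge h)) hkP)
  rw [hkeq, hkm]

lemma skein_firstRet_class (σ : Equiv.Perm B) (P : Finset B) :
    ∀ n : ℕ, ∀ (a : B) (ha : a ∈ P) (hn : (σ ^ n) a ∈ P),
      Quot.mk (fun u v : ↥P => firstRet σ P u = v) ⟨a, ha⟩ =
        Quot.mk (fun u v : ↥P => firstRet σ P u = v) ⟨(σ ^ n) a, hn⟩ := by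
  intro n
  induction n using Nat.strong_induction_on with
  | _ n ih =>
    intro a ha hn
    rcases Nat.eq_zero_or_pos n with h0 | hpos
    · subst h0
      exact congrArg _ (Subtype.ext (by simp))
    · obtain ⟨m, hm0, hmP, hmeq, hmmin⟩ := skein_firstRet_coe σ P ⟨a, ha⟩
      have hmn : m ≤ n := by
        by_contra hlt
        exact hmmin n hpos (lt_of_not_ge hlt) hn
      have step : Quot.mk (fun u v : ↥P => firstRet σ P u = v) ⟨a, ha⟩ =
          Quot.mk (fun u v : ↥P => firstRet σ P u = v) ⟨(σ ^ m) a, hmP⟩ :=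
        Quot.sound (Subtype.ext hmeq)
      have hn' : (σ ^ (n - m)) ((σ ^ m) a) ∈ P := by
        rw [← Equiv.Perm.mul_apply, ← pow_add, Nat.sub_add_cancel hmn]
        exact hn
      have ih' := ih (n - m) (by omega) ((σ ^ m) a) hmP hn'
      exact step.trans (ih'.trans (congrArg _ (Subtype.ext
        (show (σ ^ (n - m)) ((σ ^ m) a) = (σ ^ n) a by
          rw [← Equiv.Perm.mul_apply, ← pow_add, Nat.sub_add_cancel hmn]))))

lemma skein_firstRet_class_of_sameCycle (σ : Equiv.Perm B) (P : Finset B) {a b : B}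
    (ha : a ∈ P) (hb : b ∈ P) (h : σ.SameCycle a b) :
    Quot.mk (fun u v : ↥P => firstRet σ P u = v) ⟨a, ha⟩ =
      Quot.mk (fun u v : ↥P => firstRet σ P u = v) ⟨b, hb⟩ := by
  obtain ⟨n, -, hn⟩ := h.exists_pow_eq'
  have := skein_firstRet_class σ P n a ha (by rw [hn]; exact hb)
  exact this.trans (congrArg _ (Subtype.ext hn))

lemma skein_count_split (σ : Equiv.Perm B) (P : Finset B) :
    orbCount (fun a b : B => σ a = b) =
      orbCount (fun u v : ↥P => firstRet σ P u = v) +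
        Nat.card {x : Quot (fun a b : B => σ a = b) //
          ∀ a : B, Quot.mk (fun a b : B => σ a = b) a = x → a ∉ P} := by
  classical
  let r := fun a b : B => σ a = b
  let rphi := fun u v : ↥P => firstRet σ P u = v
  have wd : ∀ u v : ↥P, rphi u v → Quot.mk r (u : B) = Quot.mk r (v : B) := by
    intro u v huv
    obtain ⟨m, -, -, hmeq, -⟩ := skein_firstRet_coe σ P u
    rw [skein_quotMk_eq_iff]
    exact ⟨(m : ℤ), by rw [zpow_natCast, ← hmeq, huv]⟩
  let g : Quot rphi ⊕ {x : Quot r // ∀ a : B, Quot.mk r a = x → a ∉ P} → Quot r :=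
    Sum.elim (Quot.lift (fun u : ↥P => Quot.mk r (u : B)) wd) Subtype.val
  have hbij : Function.Bijective g := by
    constructor
    · rintro (x | x) (y | y) hxy
      · obtain ⟨u, rfl⟩ := Quot.exists_rep x
        obtain ⟨v, rfl⟩ := Quot.exists_rep y
        have hxy' : Quot.mk r (u : B) = Quot.mk r (v : B) := hxy
        have hsc := (skein_quotMk_eq_iff σ (u : B) (v : B)).1 hxy'
        have := skein_firstRet_class_of_sameCycle σ P u.2 v.2 hsc
        exact congrArg _ this
      · obtain ⟨u, rfl⟩ := Quot.exists_rep x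
        exact absurd u.2 (y.2 (u : B) hxy)
      · obtain ⟨u, rfl⟩ := Quot.exists_rep y
        exact absurd u.2 (x.2 (u : B) hxy.symm)
      · exact congrArg Sum.inr (Subtype.ext hxy)
    · intro c
      obtain ⟨b, rfl⟩ := Quot.exists_rep c
      by_cases hb : ∃ p ∈ P, σ.SameCycle b p
      · obtain ⟨p, hp, hsc⟩ := hb
        exact ⟨Sum.inl (Quot.mk rphi ⟨p, hp⟩), (skein_quotMk_eq_iff σ p b).2 hsc.symm⟩
      · refine ⟨Sum.inr ⟨Quot.mk r b, ?_⟩, rfl⟩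
        intro a hab haP
        exact hb ⟨a, haP, (skein_quotMk_eq_iff σ b a).1 hab.symm⟩
  have hcard := Nat.card_eq_of_bijective g hbij
  rw [orbCount, orbCount, ← hcard, Nat.card_sum]

lemma skein_sameCycle_congr {σ τ : Equiv.Perm B} {P : Finset B}
    (hagree : ∀ z ∉ P, σ z = τ z) {x : B}
    (hx : ∀ a, σ.SameCycle x a → a ∉ P) (a : B) :
    σ.SameCycle x a ↔ τ.SameCycle x a := by
  have key : ∀ k : ℕ, (τ ^ k) x = (σ ^ k) x := by
    intro k
    induction k with
    | zero => rfl
    | succ k ih =>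
      rw [pow_succ', pow_succ', Equiv.Perm.mul_apply, Equiv.Perm.mul_apply, ih,
        ← hagree _ (hx _ ⟨(k : ℤ), by rw [zpow_natCast]⟩)]
  constructor
  · intro h
    obtain ⟨n, -, hn⟩ := h.exists_pow_eq'
    exact ⟨(n : ℤ), by rw [zpow_natCast, key n, hn]⟩
  · intro h
    obtain ⟨n, -, hn⟩ := h.exists_pow_eq'
    exact ⟨(n : ℤ), by rw [zpow_natCast, ← key n, hn]⟩

lemma skein_isolated_transfer {σ τ : Equiv.Perm B} {P : Finset B}
    (hagree : ∀ z ∉ P, σ z = τ z) :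
    Nat.card {x : Quot (fun a b : B => σ a = b) //
        ∀ a : B, Quot.mk (fun a b : B => σ a = b) a = x → a ∉ P} =
      Nat.card {x : Quot (fun a b : B => τ a = b) //
        ∀ a : B, Quot.mk (fun a b : B => τ a = b) a = x → a ∉ P} := by
  classical
  let rσ := fun a b : B => σ a = b
  let rτ := fun a b : B => τ a = b
  have hagree' : ∀ z ∉ P, τ z = σ z := fun z hz => (hagree z hz).symm
  let rep : Quot rσ → B := fun x => (Quot.exists_rep x).choose
  have rep_spec : ∀ x : Quot rσ, Quot.mk rσ (rep x) = x := fun x => (Quot.exists_rep x).choose_spec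
  have pred_iff : ∀ (x : Quot rσ) (b : B), Quot.mk rσ b = x →
      ((∀ a : B, Quot.mk rσ a = x → a ∉ P) ↔ ∀ a, σ.SameCycle b a → a ∉ P) := by
    intro x b hb
    constructor
    · intro h a hsc
      exact h a (by rw [← hb]; exact ((skein_quotMk_eq_iff σ b a).2 hsc).symm)
    · intro h a hax
      exact h a ((skein_quotMk_eq_iff σ b a).1 (by rw [hb, hax]))
  have pred_iffτ : ∀ (x : Quot rτ) (b : B), Quot.mk rτ b = x →
      ((∀ a : B, Quot.mk rτ a = x → a ∉ P) ↔ ∀ a, τ.SameCycle b a → a ∉ P) := by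
    intro x b hb
    constructor
    · intro h a hsc
      exact h a (by rw [← hb]; exact ((skein_quotMk_eq_iff τ b a).2 hsc).symm)
    · intro h a hax
      exact h a ((skein_quotMk_eq_iff τ b a).1 (by rw [hb, hax]))
  let f : {x : Quot rσ // ∀ a : B, Quot.mk rσ a = x → a ∉ P} →
      {x : Quot rτ // ∀ a : B, Quot.mk rτ a = x → a ∉ P} := fun x =>
    ⟨Quot.mk rτ (rep x.1), by
      have hx : ∀ a, σ.SameCycle (rep x.1) a → a ∉ P :=
        (pred_iff x.1 (rep x.1) (rep_spec x.1)).1 x.2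
      rw [pred_iffτ (Quot.mk rτ (rep x.1)) (rep x.1) rfl]
      intro a hsc
      exact hx a ((skein_sameCycle_congr hagree hx a).2 hsc)⟩
  apply Nat.card_eq_of_bijective f
  constructor
  · rintro ⟨x, hx⟩ ⟨y, hy⟩ hxy
    have hx' : ∀ a, σ.SameCycle (rep x) a → a ∉ P := (pred_iff x (rep x) (rep_spec x)).1 hx
    have hsc : τ.SameCycle (rep x) (rep y) :=
      (skein_quotMk_eq_iff τ (rep x) (rep y)).1 (congrArg Subtype.val hxy)
    have hscσ : σ.SameCycle (rep x) (rep y) :=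
      (skein_sameCycle_congr hagree hx' (rep y)).2 hsc
    apply Subtype.ext
    show x = y
    rw [← rep_spec x, ← rep_spec y]
    exact (skein_quotMk_eq_iff σ (rep x) (rep y)).2 hscσ
  · rintro ⟨y, hy⟩
    obtain ⟨b, rfl⟩ := Quot.exists_rep y
    have hyb : ∀ a, τ.SameCycle b a → a ∉ P := (pred_iffτ _ b rfl).1 hy
    have hbσ : ∀ a, σ.SameCycle b a → a ∉ P := by
      intro a hsc
      exact hyb a ((skein_sameCycle_congr hagree' hyb a).2 hsc)
      -- careful: skein_sameCycle_congr hagree' hyb : τ.SameCycle b a ↔ σ.SameCycle b a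
    have hxpred : ∀ a : B, Quot.mk rσ a = Quot.mk rσ b → a ∉ P :=
      (pred_iff (Quot.mk rσ b) b rfl).2 hbσ
    refine ⟨⟨Quot.mk rσ b, hxpred⟩, ?_⟩
    apply Subtype.ext
    show Quot.mk rτ (rep (Quot.mk rσ b)) = Quot.mk rτ b
    have hscσ : σ.SameCycle b (rep (Quot.mk rσ b)) :=
      (skein_quotMk_eq_iff σ b (rep (Quot.mk rσ b))).1 (rep_spec _).symm
    have hscτ : τ.SameCycle b (rep (Quot.mk rσ b)) :=
      (skein_sameCycle_congr hagree hbσ _).1 hscσ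
    exact ((skein_quotMk_eq_iff τ b (rep (Quot.mk rσ b))).2 hscτ).symm

end SkeinAux

section SkeinAux2

open Equiv Finset LaurentPolynomial

variable {B : Type} [Fintype B] [DecidableEq B]

namespace RG

lemma ext' {G G' : RG B} (h1 : G.act = G'.act) (h2 : G.s0 = G'.s0)
    (h3 : G.s1 = G'.s1) : G = G' := by
  cases G; cases G'
  simp only [mk.injEq] at *
  subst h1; subst h2; subst h3
  exact ⟨rfl, rfl, rfl⟩

/-- The involution of `B` acting as `s1` on the active part and as the identity
elsewhere. -/
def actIv (G : RG B) : Equiv.Perm B :=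
  Function.Involutive.toPerm (fun x => if x ∈ G.act then G.s1 x else x) (by
    intro x
    by_cases hx : x ∈ G.act
    · simp only [hx, if_true, G.closed x hx, G.invol]
    · simp only [hx, if_false])

lemma actIv_apply (G : RG B) (x : B) :
    G.actIv x = if x ∈ G.act then G.s1 x else x := rfl

/-- The ambient face permutation of `B`. -/
def faceP (G : RG B) : Equiv.Perm B := G.s0 * G.actIv

lemma faceP_apply (G : RG B) (x : B) :
    G.faceP x = G.s0 (if x ∈ G.act then G.s1 x else x) := rfl

lemma faceP_pow (G : RG B) {x : B} (hx : x ∈ G.act) :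
    ∀ k, 0 < k → (∀ j, 0 < j → j < k → (G.s0 ^ j) (G.s1 x) ∉ G.act) →
      (G.faceP ^ k) x = (G.s0 ^ k) (G.s1 x) := by
  intro k
  induction k with
  | zero => omega
  | succ k ih =>
    intro _ hmin
    rcases Nat.eq_zero_or_pos k with h0 | hk
    · subst h0
      simp only [zero_add, pow_one, faceP_apply, hx, if_true]
    · rw [pow_succ', Equiv.Perm.mul_apply,
        ih hk (fun j hj1 hj2 => hmin j hj1 (hj2.trans (Nat.lt_succ_self k))),
        faceP_apply, if_neg (hmin k hk (Nat.lt_succ_self k)), pow_succ',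
        Equiv.Perm.mul_apply]

lemma ret_face (G : RG B) (u : ↥G.act) :
    G.ret0 (G.ret1 u) = firstRet G.faceP G.act u := by
  obtain ⟨m, hm0, hmP, hmeq, hmmin⟩ := skein_firstRet_coe G.s0 G.act (G.ret1 u)
  have key := G.faceP_pow u.2
  have h1 : (G.faceP ^ m) (u : B) ∈ G.act := by
    rw [key m hm0 hmmin]; exact hmP
  have h2 : ∀ j, 0 < j → j < m → (G.faceP ^ j) (u : B) ∉ G.act := fun j hj1 hj2 hmem =>
    hmmin j hj1 hj2 (by
      rwa [key j hj1 (fun i hi1 hi2 => hmmin i hi1 (hi2.trans hj2))] at hmem)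
  apply Subtype.ext
  calc (G.ret0 (G.ret1 u) : B) = (G.s0 ^ m) (G.s1 u) := hmeq
    _ = (G.faceP ^ m) (u : B) := (key m hm0 hmmin).symm
    _ = (firstRet G.faceP G.act u : B) := (skein_firstRet_unique G.faceP G.act u hm0 h1 h2).symm

lemma numF_eq (G : RG B) : G.numF = orbCount fun x y : B => G.faceP x = y := by
  have h1 : (fun u v : ↥G.act => G.ret0 (G.ret1 u) = v) =
      fun u v : ↥G.act => firstRet G.faceP G.act u = v := by
    funext u v
    rw [ret_face]
  have hagree : ∀ z ∉ G.act, G.s0 z = G.faceP z := by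
    intro z hz
    rw [faceP_apply, if_neg hz]
  rw [RG.numF, h1, RG.isolated, skein_isolated_transfer hagree, skein_count_split G.faceP G.act]

lemma faceP_contr (G : RG B) {a : B} (ha : a ∈ G.act) :
    (G.contr a).faceP = G.faceP := by
  have hb : G.s1 a ∈ G.act := G.closed a ha
  have hba : G.s1 a ≠ a := G.fpf a ha
  ext x
  have hcact : (G.contr a).act = G.act \ {a, G.s1 a} := rfl
  by_cases hxa : x = a
  · rw [hxa, faceP_apply, faceP_apply, if_pos ha, if_neg (by
      rw [hcact, Finset.mem_sdiff]
      simp)]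
    show (G.s0 * Equiv.swap a (G.s1 a)) a = G.s0 (G.s1 a)
    rw [Equiv.Perm.mul_apply, Equiv.swap_apply_left]
  by_cases hxb : x = G.s1 a
  · rw [hxb, faceP_apply, faceP_apply, if_pos hb, if_neg (by
      rw [hcact, Finset.mem_sdiff]
      simp)]
    show (G.s0 * Equiv.swap a (G.s1 a)) (G.s1 a) = G.s0 (G.s1 (G.s1 a))
    rw [Equiv.Perm.mul_apply, Equiv.swap_apply_right, G.invol]
  by_cases hx : x ∈ G.act
  · have hx' : x ∈ (G.contr a).act := by
      rw [hcact, Finset.mem_sdiff, Finset.mem_insert, Finset.mem_singleton]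
      exact ⟨hx, by tauto⟩
    rw [faceP_apply, faceP_apply, if_pos hx, if_pos hx']
    show (G.s0 * Equiv.swap a (G.s1 a)) ((G.contr a).s1 x) = G.s0 (G.s1 x)
    have h1 : (G.contr a).s1 x = G.s1 x := rfl
    have hne1 : G.s1 x ≠ a := fun h => hxb (by rw [← G.invol x, h])
    have hne2 : G.s1 x ≠ G.s1 a := fun h => hxa (G.s1.injective h)
    rw [h1, Equiv.Perm.mul_apply, Equiv.swap_apply_of_ne_of_ne hne1 hne2]
  · have hx' : x ∉ (G.contr a).act := by
      rw [hcact, Finset.mem_sdiff]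
      tauto
    rw [faceP_apply, faceP_apply, if_neg hx, if_neg hx']
    show (G.s0 * Equiv.swap a (G.s1 a)) x = G.s0 x
    rw [Equiv.Perm.mul_apply,
      Equiv.swap_apply_of_ne_of_ne hxa hxb]

lemma numF_contr (G : RG B) {a : B} (ha : a ∈ G.act) :
    (G.contr a).numF = G.numF := by
  rw [numF_eq, numF_eq, faceP_contr G ha]

lemma edge_eq_of_mem (G : RG B) {c : B} {f : Finset B} (hf : f ∈ G.edges)
    (hc : c ∈ f) : f = G.edgeOf c := by
  obtain ⟨d, -, rfl⟩ := Finset.mem_image.1 hf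
  rw [edgeOf, Finset.mem_insert, Finset.mem_singleton] at hc
  rcases hc with h | h
  · subst h; rfl
  · subst h
    rw [edgeOf, edgeOf, G.invol, Finset.pair_comm]

end RG

end SkeinAux2

section SkeinAux3

open Equiv Finset LaurentPolynomial

variable {B : Type} [Fintype B] [DecidableEq B]

namespace RG

variable (G : RG B)

lemma del_edges {a : B} (ha : a ∈ G.act) :
    (G.del a).edges = G.edges.erase (G.edgeOf a) := by
  ext f
  constructor
  · intro hf
    obtain ⟨c, hc0, rfl⟩ := Finset.mem_image.1 hf
    have hc : c ∈ G.act ∧ ¬(c = a ∨ c = G.s1 a) := by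
      have : c ∈ G.act \ {a, G.s1 a} := hc0
      simpa [Finset.mem_sdiff] using this
    have hmem : (G.del a).edgeOf c ∈ G.edges := by
      have : (G.del a).edgeOf c = G.edgeOf c := rfl
      rw [this]
      exact Finset.mem_image_of_mem _ hc.1
    refine Finset.mem_erase.2 ⟨?_, hmem⟩
    intro hEq
    have hself : c ∈ G.edgeOf c := Finset.mem_insert_self _ _
    have : c ∈ G.edgeOf a := by
      rw [← hEq]
      exact hself
    rw [edgeOf, Finset.mem_insert, Finset.mem_singleton] at this
    tauto
  · intro hf
    obtain ⟨hne, hf'⟩ := Finset.mem_erase.1 hf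
    obtain ⟨c, hc, rfl⟩ := Finset.mem_image.1 hf'
    refine Finset.mem_image.2 ⟨c, ?_, rfl⟩
    show c ∈ G.act \ {a, G.s1 a}
    rw [Finset.mem_sdiff, Finset.mem_insert, Finset.mem_singleton]
    refine ⟨hc, ?_⟩
    rintro (rfl | rfl)
    · exact hne rfl
    · exact hne (by rw [edgeOf, edgeOf, G.invol, Finset.pair_comm])

lemma contr_edges {a : B} :
    (G.contr a).edges = (G.del a).edges := rfl

lemma biUnion_ne {a : B} {S : Finset (Finset B)}
    (hS : S ⊆ G.edges.erase (G.edgeOf a)) {x : B} (hx : x ∈ S.biUnion id) :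
    x ≠ a ∧ x ≠ G.s1 a := by
  obtain ⟨f, hfS, hxf⟩ := Finset.mem_biUnion.1 hx
  have hfe := G.edge_eq_of_mem (Finset.mem_of_mem_erase (hS hfS)) hxf
  have hfne := Finset.ne_of_mem_erase (hS hfS)
  constructor
  · rintro rfl
    exact hfne hfe
  · rintro rfl
    exact hfne (by rw [hfe, edgeOf, edgeOf, G.invol, Finset.pair_comm])

lemma spanning_del {a : B} {S : Finset (Finset B)}
    (hS : S ⊆ G.edges.erase (G.edgeOf a)) :
    (G.del a).spanning S = G.spanning S := by
  refine ext' ?_ rfl rfl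
  show ((G.act \ {a, G.s1 a}).filter fun b => b ∈ S.biUnion id ∧ G.s1 b ∈ S.biUnion id)
      = G.act.filter fun b => b ∈ S.biUnion id ∧ G.s1 b ∈ S.biUnion id
  ext x
  simp only [Finset.mem_filter, Finset.mem_sdiff, Finset.mem_insert, Finset.mem_singleton]
  constructor
  · rintro ⟨⟨hx, -⟩, hp⟩
    exact ⟨hx, hp⟩
  · rintro ⟨hx, hp⟩
    obtain ⟨h1, h2⟩ := G.biUnion_ne hS hp.1
    exact ⟨⟨hx, by tauto⟩, hp⟩

lemma spanning_contr {a : B} {S : Finset (Finset B)}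
    (hS : S ⊆ G.edges.erase (G.edgeOf a)) :
    (G.contr a).spanning S = (G.spanning (insert (G.edgeOf a) S)).contr a := by
  refine ext' ?_ rfl rfl
  show ((G.act \ {a, G.s1 a}).filter fun b => b ∈ S.biUnion id ∧ G.s1 b ∈ S.biUnion id)
      = (G.act.filter fun b => b ∈ (insert (G.edgeOf a) S).biUnion id ∧
          G.s1 b ∈ (insert (G.edgeOf a) S).biUnion id) \ {a, G.s1 a}
  ext x
  simp only [Finset.mem_filter, Finset.mem_sdiff, Finset.mem_insert, Finset.mem_singleton,
    Finset.biUnion_insert, Finset.mem_union, id]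
  constructor
  · rintro ⟨⟨hx, hne⟩, h1, h2⟩
    exact ⟨⟨hx, Or.inr h1, Or.inr h2⟩, hne⟩
  · rintro ⟨⟨hx, h1, h2⟩, hne⟩
    push_neg at hne
    refine ⟨⟨hx, by tauto⟩, ?_, ?_⟩
    · rcases h1 with h | h
      · rw [edgeOf, Finset.mem_insert, Finset.mem_singleton] at h
        tauto
      · exact h
    · rcases h2 with h | h
      · exfalso
        rw [edgeOf, Finset.mem_insert, Finset.mem_singleton] at h
        rcases h with h | h
        · exact hne.2 (by rw [← G.invol x, h])
        · exact hne.1 (G.s1.injective h)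
      · exact h

lemma mem_spanning_insert {a : B} (ha : a ∈ G.act) (S : Finset (Finset B)) :
    a ∈ (G.spanning (insert (G.edgeOf a) S)).act := by
  show a ∈ G.act.filter fun b => b ∈ (insert (G.edgeOf a) S).biUnion id ∧
      G.s1 b ∈ (insert (G.edgeOf a) S).biUnion id
  rw [Finset.mem_filter, Finset.biUnion_insert]
  refine ⟨ha, ?_, ?_⟩ <;>
  · apply Finset.mem_union_left
    simp [edgeOf]

end RG

end SkeinAux3

/-- Skein relation for the bracket: if the edge `e = {a, σ₁ a}` is not a
loop, then `⟨𝔻⟩ = A ⟨𝔻 − e⟩ + A⁻¹ ⟨𝔻/e⟩`. -/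
theorem bracket_skein (D : RibbonGraph B) (a : B) (h : ¬ D.toRG.IsLoop a) :
    D.toRG.bracket =
      LaurentPolynomial.T 1 * (D.toRG.del a).bracket +
        LaurentPolynomial.T (-1) * (D.toRG.contr a).bracket := by
  classical
  set G : RG B := D.toRG with hG
  have ha : a ∈ G.act := Finset.mem_univ a
  set e : Finset B := G.edgeOf a with he_def
  have he : e ∈ G.edges := Finset.mem_image_of_mem _ ha
  have hde : (G.del a).edges = G.edges.erase e := G.del_edges ha
  have hce : (G.contr a).edges = G.edges.erase e := (G.contr_edges).trans hde
  have hpos : 0 < G.edges.card := Finset.card_pos.2 ⟨e, he⟩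
  have hnum_del : (G.del a).numE = (G.edges.erase e).card := by rw [RG.numE, hde]
  have hnum_con : (G.contr a).numE = (G.edges.erase e).card := by rw [RG.numE, hce]
  have hnumE : G.numE = (G.edges.erase e).card + 1 := by
    rw [RG.numE, Finset.card_erase_of_mem he]
    omega
  unfold RG.bracket
  rw [hde, hce]
  conv_lhs => rw [← Finset.insert_erase he]
  rw [Finset.sum_powerset_insert (Finset.notMem_erase e _), Finset.mul_sum, Finset.mul_sum]
  congr 1
  · apply Finset.sum_congr rfl
    intro S hS
    have hS' : S ⊆ G.edges.erase e := Finset.mem_powerset.1 hS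
    rw [G.spanning_del hS', hnum_del, hnumE, ← mul_assoc, ← LaurentPolynomial.T_add]
    congr 2
    push_cast
    ring
  · apply Finset.sum_congr rfl
    intro S hS
    have hS' : S ⊆ G.edges.erase e := Finset.mem_powerset.1 hS
    have heS : e ∉ S := fun hmem => (Finset.notMem_erase e G.edges) (hS' hmem)
    rw [Finset.card_insert_of_notMem heS, G.spanning_contr hS',
      RG.numF_contr _ (G.mem_spanning_insert ha S), hnum_con, hnumE,
      ← mul_assoc, ← LaurentPolynomial.T_add]
    congr 2
    push_cast
    ring
end
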